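/- Let A be a weighted directed graph on n vertices that is weakly connected with total edge weight W = ∑ i, ∑ j, A i j > 0. Then there exists a vertex i with v_f(i) > 0 and v_b(i) > 0 if and only if A is strongly connected. -/

import Mathlib

open Matrix BigOperators

noncomputable section

variable {n : ℕ}

/-- Weighted in-degree vector. -/
def indeg (A : Matrix (Fin n) (Fin n) ℝ) (j : Fin n) : ℝ := ∑ i, A i j

/-- Weighted out-degree vector. -/
def outdeg (A : Matrix (Fin n) (Fin n) ℝ) (i : Fin n) : ℝ := ∑ j, A i j

/-- Weighted in-degree Laplacian `L = diag d - A`. -/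
def inLap (A : Matrix (Fin n) (Fin n) ℝ) : Matrix (Fin n) (Fin n) ℝ :=
  Matrix.diagonal (indeg A) - A

/-- Reachability: reflexive-transitive closure of the edge relation. -/
def Reaches (A : Matrix (Fin n) (Fin n) ℝ) : Fin n → Fin n → Prop :=
  Relation.ReflTransGen fun i j => 0 < A i j

/-- Weak connectivity. -/
def WeaklyConnected (A : Matrix (Fin n) (Fin n) ℝ) : Prop :=
  ∀ i j : Fin n, Relation.ReflTransGen (fun i j => 0 < A i j ∨ 0 < A j i) i j

/-- Strong connectivity. -/
def StronglyConnected (A : Matrix (Fin n) (Fin n) ℝ) : Prop :=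
  ∀ i j : Fin n, Reaches A i j

/-- Simply forward influenced graph. -/
def SimplyForwardInfluenced (A : Matrix (Fin n) (Fin n) ℝ) : Prop :=
  (∃ i, indeg A i = 0) ∧ (∃ i, indeg A i ≠ 0) ∧
    ∀ j, indeg A j ≠ 0 → ∃ i, indeg A i = 0 ∧ Reaches A i j

/-- A set of vertices with no incoming edges from outside. -/
def InClosed (A : Matrix (Fin n) (Fin n) ℝ) (S : Finset (Fin n)) : Prop :=
  ∀ i j : Fin n, i ∉ S → j ∈ S → A i j = 0

/-- Minimal source subgraph. -/
def MinSourceSubgraph (A : Matrix (Fin n) (Fin n) ℝ) (S : Finset (Fin n)) : Prop :=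
  S.Nonempty ∧ InClosed A S ∧ ∀ T ⊆ S, T.Nonempty → T ≠ S → ¬ InClosed A T

/-- Total edge weight. -/
def totalWeight (A : Matrix (Fin n) (Fin n) ℝ) : ℝ := ∑ i, ∑ j, A i j

/-- `g` is a forward hierarchical level vector: a minimizer of `‖Lᵀ x - d‖₂`. -/
def IsFHL (A : Matrix (Fin n) (Fin n) ℝ) (g : Fin n → ℝ) : Prop :=
  ∀ x : Fin n → ℝ,
    ∑ i, ((inLap A)ᵀ.mulVec g i - indeg A i) ^ 2 ≤
      ∑ i, ((inLap A)ᵀ.mulVec x i - indeg A i) ^ 2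

/-- Forward democracy coefficient, computed from a forward hierarchical level vector `g`. -/
def etaF (A : Matrix (Fin n) (Fin n) ℝ) (g : Fin n → ℝ) : ℝ :=
  1 - (∑ i, ∑ j, A i j * (g j - g i)) / totalWeight A

/-- Forward influence centrality of a vertex, from a forward hierarchical level vector `g`. -/
def vF (A : Matrix (Fin n) (Fin n) ℝ) (g : Fin n → ℝ) (i : Fin n) : ℝ :=
  if indeg A i = 0 then 1 else 1 - (∑ k, A k i * (g i - g k)) / indeg A i

/-- `b` is the orthogonal projection of `d` onto `ker L` (standard Euclidean inner product). -/
def IsProjKerL (A : Matrix (Fin n) (Fin n) ℝ) (b : Fin n → ℝ) : Prop :=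
  (inLap A).mulVec b = 0 ∧
    ∀ x : Fin n → ℝ, (inLap A).mulVec x = 0 → ∑ i, (indeg A i - b i) * x i = 0

/-!
Write `L = inLap A` and `r = d - Lᵀ g` for a forward level vector `g`. The normal equations of
the least-squares problem say `L r = 0`, and `Lᵀ g` is orthogonal to `ker L`. Since `ker L` is
closed under `|·|`, testing against `|r|` shows `r ≥ 0`, and `v_f(i) > 0` exactly when `r i > 0`
(or `i` is a source). A nonnegative `w ∈ ker L` is a balanced flow, of value `A a b * w b`
along each edge `a → b`, so positivity of `w` spreads backwards along edges and every edge into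
its support lies on a cycle. Hence `v_f(i) > 0` forces every vertex reaching `i` to be reachable from `i`, and dually
`v_b(i) > 0` forces every vertex reachable from `i` to reach `i`; weak connectivity then gives
strong connectivity. Conversely, on a strongly connected graph `ker L` contains a positive
vector, which rules out `r = 0` when the graph has an edge, and positivity of `r` spreads to
every vertex.
-/

open Relation

lemma Relation.ReflTransGen.of_balanced_flow {ι : Type*} [Fintype ι] {f : ι → ι → ℝ}
    (hf : ∀ a b, 0 ≤ f a b) (hbal : ∀ m, ∑ p, f p m = ∑ p, f m p) {j k : ι}
    (hjk : 0 < f j k) : ReflTransGen (fun a b => 0 < f a b) k j := by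
  classical
  set S := Finset.univ.filter (ReflTransGen (fun a b => 0 < f a b) k)
  have hS : ∀ {m}, m ∈ S ↔ ReflTransGen (fun a b => 0 < f a b) k m := by simp [S]
  have split : ∀ F : ι → ι → ℝ,
      ∑ m ∈ S, ∑ p, F m p = ∑ m ∈ S, ∑ p ∈ S, F m p + ∑ m ∈ S, ∑ p ∈ Sᶜ, F m p := by
    intro F
    rw [← Finset.sum_add_distrib]
    exact Finset.sum_congr rfl fun m _ => (Finset.sum_add_sum_compl S _).symm
  -- no flow leaves `S`, so by balance none enters it
  have outflow : ∑ m ∈ S, ∑ p ∈ Sᶜ, f m p = 0 := by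
    refine Finset.sum_eq_zero fun m hm => Finset.sum_eq_zero fun p hp => ?_
    by_contra hne
    exact Finset.mem_compl.mp hp (hS.mpr ((hS.mp hm).tail ((hf m p).lt_of_ne' hne)))
  have inflow : ∑ m ∈ S, ∑ p ∈ Sᶜ, f p m = 0 := by
    have h := Finset.sum_congr rfl fun m (_ : m ∈ S) => hbal m
    rw [split (fun m p => f p m), split, outflow, Finset.sum_comm (s := S) (t := S)] at h
    linarith
  by_contra hj
  have hk : k ∈ S := hS.mpr .refl
  have := (Finset.sum_eq_zero_iff_of_nonneg fun m _ =>
    Finset.sum_nonneg fun p _ => hf p m).mp inflow k hk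
  exact hjk.ne' ((Finset.sum_eq_zero_iff_of_nonneg fun p _ => hf p k).mp this j
    (Finset.mem_compl.mpr fun h => hj (hS.mp h)))

lemma eq_zero_of_forall_mul_add_mul_nonneg {a c : ℝ} (hc : 0 ≤ c)
    (h : ∀ t, 0 ≤ t * (a + c * t)) : a = 0 := by
  have key : -a / (c + 1) * (a + c * (-a / (c + 1))) = -(a / (c + 1)) ^ 2 := by
    field_simp
    ring
  have := h (-a / (c + 1))
  rw [key] at this
  have : a / (c + 1) = 0 := by nlinarith [sq_nonneg (a / (c + 1))]
  simpa [(by linarith : c + 1 ≠ 0)] using this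

lemma Matrix.transpose_mulVec_dotProduct_of_mulVec_eq_zero {ι κ R : Type*} [Fintype ι]
    [Fintype κ] [CommSemiring R] (M : Matrix ι κ R) (g : ι → R) {v : κ → R}
    (hv : M *ᵥ v = 0) : Mᵀ *ᵥ g ⬝ᵥ v = 0 := by
  rw [dotProduct_comm, dotProduct_mulVec, vecMul_transpose, hv, zero_dotProduct]

lemma reaches_transpose_iff {A : Matrix (Fin n) (Fin n) ℝ} {a b : Fin n} :
    Reaches Aᵀ a b ↔ Reaches A b a :=
  reflTransGen_swap

lemma StronglyConnected.transpose {A : Matrix (Fin n) (Fin n) ℝ} (h : StronglyConnected A) :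
    StronglyConnected Aᵀ :=
  fun a b => reaches_transpose_iff.mpr (h b a)

lemma totalWeight_transpose (A : Matrix (Fin n) (Fin n) ℝ) : totalWeight Aᵀ = totalWeight A :=
  Finset.sum_comm

lemma StronglyConnected.of_weaklyConnected {A : Matrix (Fin n) (Fin n) ℝ} {i : Fin n}
    (hwc : WeaklyConnected A) (hi : ∀ j, Reaches A i j ↔ Reaches A j i) :
    StronglyConnected A := by
  have from_i : ∀ m, Reaches A i m := by
    intro m
    induction hwc i m with
    | refl => exact .refl
    | tail _ e ih =>
      rcases e with e | e
      · exact ih.tail e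
      · exact (hi _).mpr (.head e ((hi _).mp ih))
  exact fun j k => ((hi j).mp (from_i j)).trans (from_i k)

section Laplacian

variable {B : Matrix (Fin n) (Fin n) ℝ}

lemma indeg_nonneg (hB : ∀ i j, 0 ≤ B i j) (i : Fin n) : 0 ≤ indeg B i :=
  Finset.sum_nonneg fun j _ => hB j i

lemma sum_indeg (B : Matrix (Fin n) (Fin n) ℝ) : ∑ i, indeg B i = totalWeight B :=
  Finset.sum_comm

lemma inLap_mulVec_apply (B : Matrix (Fin n) (Fin n) ℝ) (w : Fin n → ℝ) (i : Fin n) :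
    (inLap B *ᵥ w) i = indeg B i * w i - ∑ j, B i j * w j := by
  rw [inLap, sub_mulVec, Pi.sub_apply, mulVec_diagonal]
  rfl

lemma inLap_transpose_mulVec_apply (B : Matrix (Fin n) (Fin n) ℝ) (g : Fin n → ℝ) (i : Fin n) :
    ((inLap B)ᵀ *ᵥ g) i = ∑ k, B k i * (g i - g k) := by
  rw [inLap, transpose_sub, diagonal_transpose, sub_mulVec, Pi.sub_apply, mulVec_diagonal]
  simp [mulVec, dotProduct, indeg, mul_sub, Finset.mul_sum, mul_comm]

lemma vecMul_one_inLap (B : Matrix (Fin n) (Fin n) ℝ) : 1 ᵥ* inLap B = 0 := by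
  ext j
  simp [vecMul, dotProduct, inLap, diagonal_apply, Finset.sum_sub_distrib, indeg]

lemma sum_inLap_mulVec (B : Matrix (Fin n) (Fin n) ℝ) (w : Fin n → ℝ) :
    ∑ i, (inLap B *ᵥ w) i = 0 := by
  simpa [dotProduct, vecMul_one_inLap] using dotProduct_mulVec 1 (inLap B) w

lemma inLap_mulVec_abs (hB : ∀ i j, 0 ≤ B i j) {w : Fin n → ℝ} (hw : inLap B *ᵥ w = 0) :
    inLap B *ᵥ |w| = 0 := by
  have hle : ∀ i, (inLap B *ᵥ |w|) i ≤ 0 := by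
    intro i
    have hwi := congrFun hw i
    rw [inLap_mulVec_apply] at hwi ⊢
    calc indeg B i * |w i| - ∑ j, B i j * |w j|
        = |∑ j, B i j * w j| - ∑ j, |B i j * w j| := by
          simp only [abs_mul, abs_of_nonneg (hB i _), abs_of_nonneg (indeg_nonneg hB i),
            ← (sub_eq_zero.mp hwi)]
      _ ≤ 0 := sub_nonpos.mpr (Finset.abs_sum_le_sum_abs _ _)
  ext i
  exact (Finset.sum_eq_zero_iff_of_nonpos fun i _ => hle i).mp
    (sum_inLap_mulVec B |w|) i (Finset.mem_univ i)

lemma exists_ne_zero_mem_ker_inLap (B : Matrix (Fin n) (Fin n) ℝ) [NeZero n] :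
    ∃ w, w ≠ 0 ∧ inLap B *ᵥ w = 0 :=
  exists_mulVec_eq_zero_iff.mpr
    (exists_vecMul_eq_zero_iff.mp ⟨1, one_ne_zero, vecMul_one_inLap B⟩)

lemma pos_of_edge_of_mem_ker (hB : ∀ i j, 0 ≤ B i j) {w : Fin n → ℝ} (hw : 0 ≤ w)
    (hker : inLap B *ᵥ w = 0) {j k : Fin n} (hjk : 0 < B j k) (hk : 0 < w k) : 0 < w j := by
  have hj := congrFun hker j
  rw [inLap_mulVec_apply, Pi.zero_apply, sub_eq_zero] at hj
  have hpos : 0 < ∑ m, B j m * w m :=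
    (mul_pos hjk hk).trans_le (Finset.single_le_sum (f := fun m => B j m * w m)
      (fun m _ => mul_nonneg (hB j m) (hw m)) (Finset.mem_univ k))
  rw [← hj] at hpos
  exact pos_of_mul_pos_right hpos (indeg_nonneg hB j)

-- `w` is a balanced flow of value `B a b * w b` along each edge `a → b`
lemma reaches_of_edge_of_mem_ker (hB : ∀ i j, 0 ≤ B i j) {w : Fin n → ℝ} (hw : 0 ≤ w)
    (hker : inLap B *ᵥ w = 0) {j k : Fin n} (hjk : 0 < B j k) (hk : 0 < w k) :
    Reaches B k j := by
  have hflow : ReflTransGen (fun a b => 0 < B a b * w b) k j := by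
    refine ReflTransGen.of_balanced_flow (fun a b => mul_nonneg (hB a b) (hw b)) (fun m => ?_)
      (mul_pos hjk hk)
    have hm := congrFun hker m
    rw [inLap_mulVec_apply, Pi.zero_apply, sub_eq_zero, indeg, Finset.sum_mul] at hm
    exact hm
  exact ReflTransGen.mono (fun a b h => pos_of_mul_pos_left h (hw b)) _ _ hflow

lemma pos_and_reaches_of_reaches_of_mem_ker (hB : ∀ i j, 0 ≤ B i j) {w : Fin n → ℝ}
    (hw : 0 ≤ w) (hker : inLap B *ᵥ w = 0) {j k : Fin n} (hk : 0 < w k)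
    (hjk : Reaches B j k) : 0 < w j ∧ Reaches B k j := by
  induction hjk using ReflTransGen.head_induction_on with
  | refl => exact ⟨hk, .refl⟩
  | head e _ ih =>
    exact ⟨pos_of_edge_of_mem_ker hB hw hker e ih.1,
      ih.2.trans (reaches_of_edge_of_mem_ker hB hw hker e ih.1)⟩

lemma exists_pos_mem_ker_inLap (hB : ∀ i j, 0 ≤ B i j) (hsc : StronglyConnected B)
    [NeZero n] : ∃ w, (∀ i, 0 < w i) ∧ inLap B *ᵥ w = 0 := by
  obtain ⟨x, hx, hxker⟩ := exists_ne_zero_mem_ker_inLap B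
  obtain ⟨k, hk⟩ := Function.ne_iff.mp hx
  have habs := inLap_mulVec_abs hB hxker
  exact ⟨|x|, fun i => (pos_and_reaches_of_reaches_of_mem_ker hB (abs_nonneg x) habs
    (abs_pos.mpr hk) (hsc i k)).1, habs⟩

def levelResidual (B : Matrix (Fin n) (Fin n) ℝ) (g : Fin n → ℝ) : Fin n → ℝ :=
  indeg B - (inLap B)ᵀ *ᵥ g

variable {g : Fin n → ℝ}

lemma IsFHL.inLap_mulVec_levelResidual (hg : IsFHL B g) :
    inLap B *ᵥ levelResidual B g = 0 := by
  set L := inLap B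
  set u := Lᵀ *ᵥ g - indeg B
  set z := L *ᵥ u
  have hsq : ∀ x, ∑ i, ((Lᵀ *ᵥ x) i - indeg B i) ^ 2 =
      (Lᵀ *ᵥ x - indeg B) ⬝ᵥ (Lᵀ *ᵥ x - indeg B) := fun x => by simp [dotProduct, sq]
  have hcross : u ⬝ᵥ Lᵀ *ᵥ z = z ⬝ᵥ z := by rw [dotProduct_mulVec, vecMul_transpose]
  -- perturbing `g` along `z` cannot decrease the error
  have hquad : ∀ t : ℝ, 0 ≤ t * (2 * (z ⬝ᵥ z) + (Lᵀ *ᵥ z ⬝ᵥ Lᵀ *ᵥ z) * t) := by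
    intro t
    have h := hg (g + t • z)
    have hshift : Lᵀ *ᵥ (g + t • z) - indeg B = u + t • Lᵀ *ᵥ z := by
      rw [mulVec_add, mulVec_smul, add_sub_right_comm]
    rw [hsq, hsq, hshift] at h
    simp only [add_dotProduct, dotProduct_add, dotProduct_smul, smul_dotProduct,
      dotProduct_comm (Lᵀ *ᵥ z) u, hcross, smul_eq_mul] at h
    linarith
  have hLz : 0 ≤ Lᵀ *ᵥ z ⬝ᵥ Lᵀ *ᵥ z := Finset.sum_nonneg fun i _ => mul_self_nonneg _
  have hz : z = 0 := by
    have := eq_zero_of_forall_mul_add_mul_nonneg hLz hquad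
    exact dotProduct_self_eq_zero.mp (by linarith)
  have hr : levelResidual B g = -u := by simp [levelResidual, u, L]
  rw [hr, mulVec_neg, neg_eq_zero]
  exact hz

lemma IsFHL.levelResidual_nonneg (hB : ∀ i j, 0 ≤ B i j) (hg : IsFHL B g) :
    0 ≤ levelResidual B g := by
  set r := levelResidual B g
  have hr : inLap B *ᵥ r = 0 := hg.inLap_mulVec_levelResidual
  have hLg : (inLap B)ᵀ *ᵥ g = indeg B - r := by simp [r, levelResidual]
  have horth := transpose_mulVec_dotProduct_of_mulVec_eq_zero _ g hr
  have horth_abs := transpose_mulVec_dotProduct_of_mulVec_eq_zero _ g (inLap_mulVec_abs hB hr)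
  rw [hLg] at horth horth_abs
  have hsum : ∑ m, (indeg B m - r m) * (|r m| - r m) = 0 := by
    simp only [dotProduct, Pi.sub_apply, Pi.abs_apply] at horth horth_abs
    simp only [mul_sub, Finset.sum_sub_distrib, horth, horth_abs, sub_zero]
  have hterm_pos : ∀ m, r m < 0 → 0 < (indeg B m - r m) * (|r m| - r m) := fun m hm =>
    mul_pos (by linarith [indeg_nonneg hB m]) (by rw [abs_of_neg hm]; linarith)
  have hterm_nonneg : ∀ m, 0 ≤ (indeg B m - r m) * (|r m| - r m) := fun m => by
    rcases lt_or_ge (r m) 0 with hm | hm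
    · exact (hterm_pos m hm).le
    · simp [abs_of_nonneg hm]
  intro m
  by_contra hm
  exact (hterm_pos m (not_le.mp hm)).ne' ((Finset.sum_eq_zero_iff_of_nonneg
    fun m _ => hterm_nonneg m).mp hsum m (Finset.mem_univ m))

lemma vF_pos_iff (hB : ∀ i j, 0 ≤ B i j) {i : Fin n} (hd : indeg B i ≠ 0) :
    0 < vF B g i ↔ 0 < levelResidual B g i := by
  have hdpos : 0 < indeg B i := (indeg_nonneg hB i).lt_of_ne' hd
  rw [vF, if_neg hd, levelResidual, Pi.sub_apply, ← inLap_transpose_mulVec_apply, sub_pos,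
    sub_pos, div_lt_one hdpos]

lemma eq_of_reaches_of_indeg_eq_zero (hB : ∀ i j, 0 ≤ B i j) {i j : Fin n}
    (hd : indeg B i = 0) (hji : Reaches B j i) : j = i := by
  rcases hji.cases_tail with h | ⟨c, -, hc⟩
  · exact h.symm
  · exact absurd ((Finset.sum_eq_zero_iff_of_nonneg fun m _ => hB m i).mp hd c
      (Finset.mem_univ c)) hc.ne'

lemma IsFHL.reaches_of_vF_pos (hB : ∀ i j, 0 ≤ B i j) (hg : IsFHL B g) {i j : Fin n}
    (hv : 0 < vF B g i) (hji : Reaches B j i) : Reaches B i j := by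
  by_cases hd : indeg B i = 0
  · rw [eq_of_reaches_of_indeg_eq_zero hB hd hji]
    exact .refl
  · exact (pos_and_reaches_of_reaches_of_mem_ker hB (hg.levelResidual_nonneg hB)
      hg.inLap_mulVec_levelResidual ((vF_pos_iff hB hd).mp hv) hji).2

lemma IsFHL.vF_pos_of_stronglyConnected (hB : ∀ i j, 0 ≤ B i j) (hsc : StronglyConnected B)
    (hW : 0 < totalWeight B) (hg : IsFHL B g) (i : Fin n) : 0 < vF B g i := by
  have : NeZero n := ⟨by rintro rfl; exact i.elim0⟩
  set r := levelResidual B g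
  have hr_nonneg := hg.levelResidual_nonneg hB
  have hr_ker := hg.inLap_mulVec_levelResidual
  obtain ⟨w, hw, hw_ker⟩ := exists_pos_mem_ker_inLap hB hsc
  -- `d ⬝ w = r ⬝ w` because `Lᵀ g ⊥ w`, and `d ⬝ w > 0` as the graph has an edge
  have hr_ne : r ≠ 0 := by
    intro hr0
    have horth := transpose_mulVec_dotProduct_of_mulVec_eq_zero _ g hw_ker
    have hLg : (inLap B)ᵀ *ᵥ g = indeg B := by
      simpa [r, levelResidual, sub_eq_zero, eq_comm] using hr0
    rw [hLg, dotProduct, Finset.sum_eq_zero_iff_of_nonneg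
      fun m _ => mul_nonneg (indeg_nonneg hB m) (hw m).le] at horth
    have hd : ∀ m, indeg B m = 0 := fun m =>
      (mul_eq_zero.mp (horth m (Finset.mem_univ m))).resolve_right (hw m).ne'
    simp [← sum_indeg, hd] at hW
  obtain ⟨m, hm⟩ := Function.ne_iff.mp hr_ne
  have hrm : 0 < r m := (hr_nonneg m).lt_of_ne' hm
  by_cases hd : indeg B i = 0
  · simp [vF, hd]
  · exact (vF_pos_iff hB hd).mpr
      (pos_and_reaches_of_reaches_of_mem_ker hB hr_nonneg hr_ker hrm (hsc i m)).1

end Laplacian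

theorem stmt_17_general (A : Matrix (Fin n) (Fin n) ℝ)
    (hA : ∀ i j, 0 ≤ A i j)
    (hwc : WeaklyConnected A) (hW : 0 < totalWeight A)
    (g γ : Fin n → ℝ) (hg : IsFHL A g) (hγ : IsFHL Aᵀ γ) :
    (∃ i : Fin n, 0 < vF A g i ∧ 0 < vF Aᵀ γ i) ↔ StronglyConnected A := by
  have hAT : ∀ i j, 0 ≤ Aᵀ i j := fun i j => hA j i
  constructor
  · rintro ⟨i, hvf, hvb⟩
    refine StronglyConnected.of_weaklyConnected hwc (i := i) fun j =>
      ⟨fun hij => ?_, hg.reaches_of_vF_pos hA hvf⟩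
    exact reaches_transpose_iff.mp (hγ.reaches_of_vF_pos hAT hvb (reaches_transpose_iff.mpr hij))
  · intro hsc
    obtain ⟨i, -⟩ := Finset.exists_ne_zero_of_sum_ne_zero hW.ne'
    exact ⟨i, hg.vF_pos_of_stronglyConnected hA hsc hW i,
      hγ.vF_pos_of_stronglyConnected hAT hsc.transpose (by rwa [totalWeight_transpose]) i⟩

theorem stmt_17 (hn : 0 < n) (A : Matrix (Fin n) (Fin n) ℝ)
    (hA : ∀ i j, 0 ≤ A i j) (hdiag : ∀ i, A i i = 0)
    (hwc : WeaklyConnected A) (hW : 0 < totalWeight A)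
    (g γ : Fin n → ℝ) (hg : IsFHL A g) (hγ : IsFHL Aᵀ γ) :
    (∃ i : Fin n, 0 < vF A g i ∧ 0 < vF Aᵀ γ i) ↔ StronglyConnected A :=
  stmt_17_general A hA hwc hW g γ hg hγ
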